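/- arXiv:1910.11850 — 4 statements merged into one kernel-verified Lean document; each statement's English description precedes it below -/
import Mathlib

section
/- Majority decoding lemma: Let 𝓢' be a finite collection of subsets of [n] such that any two distinct S₁,S₂ ∈ 𝓢' satisfy |S₁ ∩ S₂| ≤ ρn. Let {f_S}_{S∈𝓢'} be functions f_S : S → {0,1} such that for a uniformly random pair S₁,S₂ from 𝓢' (independently), Pr[disagr(f_{S₁},f_{S₂}) ≤ ζn] ≥ 1-κ. Define g:[n]→{0,1} by g(x) = majority of f_S(x) over those S ∈ 𝓢' containing x. Then E_{S∈𝓢'}[disagr(g, f_S)] ≤ n·√(ρκ + ζ). -/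
open Finset

/-- The pointwise-majority function of a collection of local functions `f S : S → Bool`
(values of `f S` outside `S` are ignored); ties are broken towards `true`. -/
def majFun {n : ℕ} (S' : Finset (Finset (Fin n))) (f : Finset (Fin n) → Fin n → Bool)
    (x : Fin n) : Bool :=
  decide ((S'.filter (fun S => x ∈ S ∧ f S x = false)).card
      ≤ (S'.filter (fun S => x ∈ S ∧ f S x = true)).card)

/-!
For a point `u`, let `a u` and `b u` count the sets `S ∋ u` with `f S u ≠ g u` and with
`f S u = g u`. The total disagreement `L` of `g` with the `f S` is `∑ a`, and the total
pairwise disagreement `T` of the `f S` is `∑ 2ab`, since a pair disagrees at `u` exactly when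
one of its members agrees with `g u` and the other does not. For the majority `g` we have
`a ≤ b`, so Cauchy–Schwarz gives `L² ≤ n ∑ a² ≤ n T`. On the other hand, a pair contributes at
most `ζn` to `T` unless it is one of the at most `κm²` bad pairs; these lie off the diagonal,
so they contribute at most `ρn` each, and `T ≤ (ρκ + ζ) n m²`.
-/

section Counting

variable {α : Type*} [DecidableEq α]
  (S' : Finset (Finset α)) (f : Finset α → α → Bool) (g : α → Bool)

def disagreeCount (u : α) : ℕ := #{S ∈ S' | u ∈ S ∧ f S u ≠ g u}

def agreeCount (u : α) : ℕ := #{S ∈ S' | u ∈ S ∧ f S u = g u}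

theorem card_filter_pair_ne_eq (u : α) :
    #{P ∈ S' ×ˢ S' | u ∈ P.1 ∧ u ∈ P.2 ∧ f P.1 u ≠ f P.2 u}
      = 2 * (disagreeCount S' f g u * agreeCount S' f g u) := by
  set A := {S ∈ S' | u ∈ S ∧ f S u ≠ g u}
  set B := {S ∈ S' | u ∈ S ∧ f S u = g u}
  have hunion : {P ∈ S' ×ˢ S' | u ∈ P.1 ∧ u ∈ P.2 ∧ f P.1 u ≠ f P.2 u}
      = A ×ˢ B ∪ B ×ˢ A := by
    ext ⟨S₁, S₂⟩
    simp only [A, B, mem_filter, mem_product, mem_union]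
    cases f S₁ u <;> cases f S₂ u <;> cases g u <;> simp <;> tauto
  have hdisj : Disjoint (A ×ˢ B) (B ×ˢ A) :=
    disjoint_product.2 (Or.inl (disjoint_filter.2 fun _ _ hA hB => hA.2 hB.2))
  rw [hunion, card_union_of_disjoint hdisj, card_product, card_product]
  simp only [disagreeCount, agreeCount, A, B]
  ring

theorem card_filter_pair_ne_le_of_not_le {t r : ℝ} (ht : 0 ≤ t)
    (hint : ∀ S₁ ∈ S', ∀ S₂ ∈ S', S₁ ≠ S₂ → (#(S₁ ∩ S₂) : ℝ) ≤ r) :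
    ∀ P ∈ S' ×ˢ S', ¬ (#{u ∈ P.1 ∩ P.2 | f P.1 u ≠ f P.2 u} : ℝ) ≤ t →
      (#{u ∈ P.1 ∩ P.2 | f P.1 u ≠ f P.2 u} : ℝ) ≤ r := by
  rintro ⟨S₁, S₂⟩ hP hfar
  obtain ⟨hS₁, hS₂⟩ := mem_product.1 hP
  have hdiff : S₁ ≠ S₂ := by
    rintro rfl
    exact hfar (by simpa using ht)
  exact (Nat.cast_le.2 (card_filter_le _ _)).trans (hint S₁ hS₁ S₂ hS₂ hdiff)

variable [Fintype α]

theorem sum_card_filter_ne_eq_sum_disagreeCount :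
    ∑ S ∈ S', #{u ∈ S | g u ≠ f S u} = ∑ u, disagreeCount S' f g u := by
  have (S : Finset α) : #{u ∈ S | g u ≠ f S u} = #{u | u ∈ S ∧ f S u ≠ g u} := by
    congr 1; ext u; simp [ne_comm]
  simp only [this, disagreeCount, card_filter]
  exact sum_comm

theorem sum_card_filter_pair_ne_eq :
    ∑ P ∈ S' ×ˢ S', #{u ∈ P.1 ∩ P.2 | f P.1 u ≠ f P.2 u}
      = ∑ u, #{P ∈ S' ×ˢ S' | u ∈ P.1 ∧ u ∈ P.2 ∧ f P.1 u ≠ f P.2 u} := by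
  have (P : Finset α × Finset α) : #{u ∈ P.1 ∩ P.2 | f P.1 u ≠ f P.2 u}
      = #{u | u ∈ P.1 ∧ u ∈ P.2 ∧ f P.1 u ≠ f P.2 u} := by
    congr 1; ext u; simp [and_assoc]
  simp only [this, card_filter]
  exact sum_comm

theorem sq_sum_card_filter_ne_le (hg : ∀ u, disagreeCount S' f g u ≤ agreeCount S' f g u) :
    (∑ S ∈ S', #{u ∈ S | g u ≠ f S u}) ^ 2
      ≤ Fintype.card α * ∑ P ∈ S' ×ˢ S', #{u ∈ P.1 ∩ P.2 | f P.1 u ≠ f P.2 u} := by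
  rw [sum_card_filter_ne_eq_sum_disagreeCount, sum_card_filter_pair_ne_eq]
  simp_rw [card_filter_pair_ne_eq S' f g]
  refine sq_sum_le_card_mul_sum_sq.trans (Nat.mul_le_mul_left _ (sum_le_sum fun u _ => ?_))
  calc disagreeCount S' f g u ^ 2 ≤ disagreeCount S' f g u * agreeCount S' f g u := by
        rw [sq]; exact Nat.mul_le_mul_left _ (hg u)
    _ ≤ 2 * (disagreeCount S' f g u * agreeCount S' f g u) := Nat.le_mul_of_pos_left _ two_pos

end Counting

theorem disagreeCount_majFun_le {n : ℕ} (S' : Finset (Finset (Fin n)))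
    (f : Finset (Fin n) → Fin n → Bool) (u : Fin n) :
    disagreeCount S' f (majFun S' f) u ≤ agreeCount S' f (majFun S' f) u := by
  unfold disagreeCount agreeCount majFun
  by_cases h : #{S ∈ S' | u ∈ S ∧ f S u = false} ≤ #{S ∈ S' | u ∈ S ∧ f S u = true}
  · simp [h]
  · simpa [h] using (not_le.1 h).le

theorem sum_le_of_card_filter_le {ι : Type*} (s : Finset ι) (w : ι → ℝ) {t r κ : ℝ}
    (ht : 0 ≤ t) (hr : 0 ≤ r) (hbad : ∀ i ∈ s, ¬ w i ≤ t → w i ≤ r)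
    (hcard : (1 - κ) * #s ≤ (#{i ∈ s | w i ≤ t} : ℝ)) :
    ∑ i ∈ s, w i ≤ (κ * r + t) * #s := by
  have hgood : ∑ i ∈ s with w i ≤ t, w i ≤ #{i ∈ s | w i ≤ t} * t := by
    simpa using sum_le_card_nsmul {i ∈ s | w i ≤ t} w t fun i hi => (mem_filter.1 hi).2
  have hbad' : ∑ i ∈ s with ¬ w i ≤ t, w i ≤ #{i ∈ s | ¬ w i ≤ t} * r := by
    simpa using sum_le_card_nsmul {i ∈ s | ¬ w i ≤ t} w r fun i hi =>
      hbad i (mem_filter.1 hi).1 (mem_filter.1 hi).2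
  have hsplit : (#{i ∈ s | w i ≤ t} : ℝ) + #{i ∈ s | ¬ w i ≤ t} = #s := by
    exact_mod_cast card_filter_add_card_filter_not (s := s) (fun i => w i ≤ t)
  calc ∑ i ∈ s, w i
      = ∑ i ∈ s with w i ≤ t, w i + ∑ i ∈ s with ¬ w i ≤ t, w i :=
        (sum_filter_add_sum_filter_not s (fun i => w i ≤ t) w).symm
    _ ≤ #{i ∈ s | w i ≤ t} * t + #{i ∈ s | ¬ w i ≤ t} * r := add_le_add hgood hbad'
    _ ≤ #s * t + κ * #s * r := by
        gcongr
        · exact filter_subset _ _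
        · linarith
    _ = (κ * r + t) * #s := by ring

theorem stmt_3_general (n : ℕ) (ρ ζ κ : ℝ) (hρ : 0 < ρ) (hζ : 0 < ζ)
    (S' : Finset (Finset (Fin n)))
    (f : Finset (Fin n) → Fin n → Bool)
    (hint : ∀ S₁ ∈ S', ∀ S₂ ∈ S', S₁ ≠ S₂ → ((S₁ ∩ S₂).card : ℝ) ≤ ρ * n)
    (hpr : (1 - κ) * ((S'.card : ℝ)) ^ 2
      ≤ (((S' ×ˢ S').filter (fun P =>
          (((P.1 ∩ P.2).filter (fun u => f P.1 u ≠ f P.2 u)).card : ℝ) ≤ ζ * n)).card : ℝ)) :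
    (∑ S ∈ S', ((S.filter (fun u => majFun S' f u ≠ f S u)).card : ℝ))
      ≤ (S'.card : ℝ) * ((n : ℝ) * Real.sqrt (ρ * κ + ζ)) := by
  set L := ∑ S ∈ S', ((S.filter (fun u => majFun S' f u ≠ f S u)).card : ℝ)
  set T := ∑ P ∈ S' ×ˢ S', (((P.1 ∩ P.2).filter (fun u => f P.1 u ≠ f P.2 u)).card : ℝ)
  have hLT : L ^ 2 ≤ n * T := by
    have := sq_sum_card_filter_ne_le S' f (majFun S' f) (disagreeCount_majFun_le S' f)
    rw [Fintype.card_fin] at this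
    simp only [L, T]
    exact_mod_cast this
  have hT : T ≤ (ρ * κ + ζ) * n * (S'.card : ℝ) ^ 2 := by
    have := sum_le_of_card_filter_le (S' ×ˢ S') _ (t := ζ * n) (κ := κ) (by positivity)
      (by positivity) (card_filter_pair_ne_le_of_not_le S' f (by positivity) hint)
      (by rwa [card_product, Nat.cast_mul, ← sq])
    rw [card_product, Nat.cast_mul] at this
    linarith
  have hL : L ^ 2 ≤ (ρ * κ + ζ) * (n * S'.card) ^ 2 :=
    calc L ^ 2 ≤ n * T := hLT
      _ ≤ n * ((ρ * κ + ζ) * n * (S'.card : ℝ) ^ 2) := by gcongr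
      _ = (ρ * κ + ζ) * (n * S'.card) ^ 2 := by ring
  calc L ≤ √((ρ * κ + ζ) * (n * S'.card) ^ 2) := (le_abs_self L).trans (Real.abs_le_sqrt hL)
    _ = S'.card * (n * √(ρ * κ + ζ)) := by
        rw [Real.sqrt_mul' _ (sq_nonneg _), Real.sqrt_sq (by positivity)]
        ring

/-- Majority decoding lemma: if any two distinct sets of `𝓢'` intersect in at most `ρn`
elements and a random pair of the local functions disagrees on at most `ζn` points with
probability at least `1-κ`, then the majority function `g` satisfies
`E_{S∈𝓢'}[disagr(g, f_S)] ≤ n·√(ρκ + ζ)`. -/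
theorem stmt_3 (n : ℕ) (ρ ζ κ : ℝ) (hρ : 0 < ρ) (hζ : 0 < ζ) (hκ : 0 < κ)
    (S' : Finset (Finset (Fin n))) (hne : S'.Nonempty)
    (f : Finset (Fin n) → Fin n → Bool)
    (hint : ∀ S₁ ∈ S', ∀ S₂ ∈ S', S₁ ≠ S₂ → ((S₁ ∩ S₂).card : ℝ) ≤ ρ * n)
    (hpr : (1 - κ) * ((S'.card : ℝ)) ^ 2
      ≤ (((S' ×ˢ S').filter (fun P =>
          (((P.1 ∩ P.2).filter (fun u => f P.1 u ≠ f P.2 u)).card : ℝ) ≤ ζ * n)).card : ℝ)) :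
    (∑ S ∈ S', ((S.filter (fun u => majFun S' f u ≠ f S u)).card : ℝ))
      ≤ (S'.card : ℝ) * ((n : ℝ) * Real.sqrt (ρ * κ + ζ)) :=
  stmt_3_general n ρ ζ κ hρ hζ S' f hint hpr
end

section
/- Counting inequality used in red-blue transitivity: for integers t ≥ 2 and k ≥ 10t/α with 0 < α ≤ 1, one has 2α·C(k,2t-3) − (C(k,2t-4) + C(k,2t-5) + ⋯ + C(k,0)) ≥ α·C(k,2t-3). -/
/-!
For `j < 2t - 3` the ratio `C(k,j) / C(k,j+1) = (j+1)/(k-j)` is at most `α/2`, because `αk ≥ 10t`.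
A sum `S = ∑_{j<m} f j` with `f j ≤ r · f (j+1)` satisfies `S ≤ r (S + f m)` by shifting the index,
i.e. `(1 - r) S ≤ r · f m`; with `r = α/2 ≤ 1/2` this gives `S ≤ α · C(k,2t-3)`.
-/

open Finset

theorem mul_sum_range_le_of_le_mul_succ {f : ℕ → ℝ} {r : ℝ} {m : ℕ} (hr : 0 ≤ r) (hf : 0 ≤ f 0)
    (h : ∀ j < m, f j ≤ r * f (j + 1)) :
    (1 - r) * ∑ j ∈ range m, f j ≤ r * f m := by
  have hshift : ∑ j ∈ range m, f j ≤ r * (∑ j ∈ range m, f j + f m - f 0) := by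
    calc ∑ j ∈ range m, f j ≤ ∑ j ∈ range m, r * f (j + 1) :=
          sum_le_sum fun j hj => h j (mem_range.mp hj)
      _ = r * (∑ j ∈ range m, f j + f m - f 0) := by
          rw [← mul_sum, ← sum_range_succ, sum_range_succ' f m, add_sub_cancel_right]
  nlinarith

theorem Nat.choose_le_mul_choose_succ {k j : ℕ} {r : ℝ} (hr : 0 ≤ r)
    (hj : (j + 1 : ℝ) ≤ r * (k - j)) :
    (k.choose j : ℝ) ≤ r * k.choose (j + 1) := by
  have hjk : j < k := by
    by_contra! hkj
    have : (k : ℝ) - j ≤ 0 := by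
      rw [sub_nonpos]
      exact_mod_cast hkj
    nlinarith
  have hrec : (k.choose (j + 1) : ℝ) * (j + 1) = k.choose j * (k - j) := by
    have := congrArg (Nat.cast (R := ℝ)) (Nat.choose_succ_right_eq k j)
    push_cast [Nat.cast_sub hjk.le] at this
    exact this
  have hkj : (0 : ℝ) < k - j := by
    rw [sub_pos]
    exact_mod_cast hjk
  refine le_of_mul_le_mul_right ?_ hkj
  rw [← hrec]
  nlinarith [(k.choose (j + 1)).cast_nonneg (α := ℝ)]

theorem stmt_6_general (t k : ℕ) (α : ℝ) (hα : 0 < α) (hα1 : α ≤ 1)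
    (hk : (10 * t : ℝ) ≤ α * k) :
    α * (k.choose (2 * t - 3) : ℝ)
      ≤ 2 * α * (k.choose (2 * t - 3) : ℝ)
        - ∑ j ∈ Finset.range (2 * t - 3), (k.choose j : ℝ) := by
  have hratio : ∀ j < 2 * t - 3, (k.choose j : ℝ) ≤ α / 2 * k.choose (j + 1) := by
    intro j hj
    have hjt : (j + 1 : ℝ) ≤ 2 * t := by exact_mod_cast (by omega : j + 1 ≤ 2 * t)
    refine Nat.choose_le_mul_choose_succ (by positivity) ?_
    nlinarith [j.cast_nonneg (α := ℝ)]
  have hsum := mul_sum_range_le_of_le_mul_succ (by positivity) (by positivity) hratio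
  nlinarith [sum_nonneg fun j (_ : j ∈ range (2 * t - 3)) => (k.choose j).cast_nonneg (α := ℝ)]

/-- Counting inequality used in red-blue transitivity: for `t ≥ 2`, `0 < α ≤ 1` and
`k ≥ 10t/α`, `2α·C(k,2t-3) − (C(k,2t-4) + ⋯ + C(k,0)) ≥ α·C(k,2t-3)`. -/
theorem stmt_6 (t k : ℕ) (ht : 2 ≤ t) (α : ℝ) (hα : 0 < α) (hα1 : α ≤ 1)
    (hk : (10 * t : ℝ) ≤ α * k) :
    α * (k.choose (2 * t - 3) : ℝ)
      ≤ 2 * α * (k.choose (2 * t - 3) : ℝ)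
        - ∑ j ∈ Finset.range (2 * t - 3), (k.choose j : ℝ) :=
  stmt_6_general t k α hα hα1 hk
end

section
/- Random subsets form strong intersection dispersers: Let U be a universe of size m₀, and let 𝓗 = {H₁,…,H_{k₀}} be random subsets of U where each element is included in each H_j independently with probability p. For constants 0 < p, κ < 1 and ℓ ∈ ℕ, with probability tending to 1 as m₀ → ∞, 𝓗 is a (κk₀^ℓ, ℓ, 2ℓ·e^{−pκk₀/ℓ})-strong intersection disperser. -/
/-!
An element `u` is missed by the subcollections `Js` exactly when its column `j ↦ ω j u`, a
`p`-biased vector, falsifies the monotone formula `⋁_{J ∈ Js} ⋀_{j ∈ J} x_j`. If the terms have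
size at most `ℓ` and there are at least `κ k₀^ℓ` of them, this has probability at most
`ℓ e^{-pκk₀/ℓ} = η/2`, by induction on `ℓ`: conditioning on a variable `x` of maximal degree, the
link of `x` (a formula with shorter terms, at least a `1/k₀` fraction of them) is satisfied with
probability `p`, and otherwise we pass to the deletion of `x`, which loses at most `k₀^ℓ` terms.
The columns are independent, so by a Chernoff bound more than `η m₀` missed elements has
probability exponentially small in `m₀`, and a union bound over the finitely many `Js`, whose
number does not depend on `m₀`, finishes the proof.
-/

open Finset

/-- Indexed-family version of an `(r, ℓ, η)`-strong intersection disperser: for any at least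
`r` distinct subcollections (given by index sets), each of size at most `ℓ`, the union of
their intersections covers all but an `η` fraction of `U`. -/
def SIDFam {m k : ℕ} (U : Finset (Fin m)) (H : Fin k → Finset (Fin m))
    (r : ℝ) (ℓ : ℕ) (η : ℝ) : Prop :=
  ∀ Js : Finset (Finset (Fin k)),
    (∀ J ∈ Js, J.card ≤ ℓ) → r ≤ (Js.card : ℝ) →
      ((U \ Js.sup (fun J => U ∩ J.inf H)).card : ℝ) ≤ η * (U.card : ℝ)

open Real

section BiasedWeight

variable {ι : Type*} [Fintype ι] {p : ℝ}

def coinWeight (p : ℝ) (c : Bool) : ℝ := if c then p else 1 - p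

def biasedWeight (p : ℝ) (b : ι → Bool) : ℝ := ∏ i, coinWeight p (b i)

lemma coinWeight_nonneg (hp0 : 0 ≤ p) (hp1 : p ≤ 1) (c : Bool) : 0 ≤ coinWeight p c := by
  cases c <;> simp [coinWeight] <;> linarith

lemma biasedWeight_nonneg (hp0 : 0 ≤ p) (hp1 : p ≤ 1) (b : ι → Bool) : 0 ≤ biasedWeight p b :=
  prod_nonneg fun i _ => coinWeight_nonneg hp0 hp1 (b i)

lemma sum_biasedWeight [DecidableEq ι] : ∑ b : ι → Bool, biasedWeight p b = 1 := by
  simp only [biasedWeight]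
  rw [← Fintype.prod_sum fun (_ : ι) => coinWeight p]
  simp [coinWeight]

lemma biasedWeight_update_mul [DecidableEq ι] (b : ι → Bool) (x : ι) (c : Bool) :
    biasedWeight p (Function.update b x c) * coinWeight p (b x)
      = biasedWeight p b * coinWeight p c := by
  have hupd : biasedWeight p (Function.update b x c)
      = coinWeight p c * ∏ i ∈ univ \ {x}, coinWeight p (b i) := by
    rw [biasedWeight, ← prod_update_of_mem (mem_univ x)]
    exact prod_congr rfl fun i _ => Function.apply_update (fun _ => coinWeight p) b x c i
  rw [hupd, biasedWeight, prod_eq_mul_prod_sdiff_singleton x _ fun h => absurd (mem_univ x) h]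
  ring

lemma sum_biasedWeight_mul_eq [DecidableEq ι] (x : ι) (G : (ι → Bool) → ℝ) :
    ∑ b, biasedWeight p b * G b = ∑ b, biasedWeight p b *
      (p * G (Function.update b x true) + (1 - p) * G (Function.update b x false)) := by
  -- `(b, c) ↦ (update b x c, b x)` is an involution preserving `biasedWeight p b * coinWeight p c`
  have hinv : Function.Involutive fun bc : (ι → Bool) × Bool =>
      (Function.update bc.1 x bc.2, bc.1 x) := fun bc => by simp
  have hswap := Equiv.sum_comp (hinv.toPerm _) fun bc : (ι → Bool) × Bool =>
    biasedWeight p bc.1 * coinWeight p bc.2 * G bc.1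
  simp only [Fintype.sum_prod_type, Fintype.sum_bool, Function.Involutive.coe_toPerm,
    biasedWeight_update_mul] at hswap
  simp only [coinWeight, if_true, Bool.false_eq_true, if_false] at hswap
  calc ∑ b, biasedWeight p b * G b
      = ∑ b, (biasedWeight p b * p * G b + biasedWeight p b * (1 - p) * G b) :=
        sum_congr rfl fun b _ => by ring
    _ = _ := hswap.symm
    _ = _ := sum_congr rfl fun b _ => by ring

end BiasedWeight

section Uncovered

variable {ι : Type*} [DecidableEq ι] {p : ℝ}

/-- `b` falsifies the monotone formula `⋁_{t ∈ T} ⋀_{j ∈ t} b j`. -/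
def Uncovered (T : Finset (Finset ι)) (b : ι → Bool) : Prop := ∀ t ∈ T, ∃ j ∈ t, b j = false

instance (T : Finset (Finset ι)) : DecidablePred (Uncovered T) := fun _ => by
  unfold Uncovered; infer_instance

def link (T : Finset (Finset ι)) (x : ι) : Finset (Finset ι) := {t ∈ T | x ∈ t}.image (·.erase x)

lemma Uncovered.link_of_update_true {T : Finset (Finset ι)} {b : ι → Bool} {x : ι}
    (h : Uncovered T (Function.update b x true)) : Uncovered (link T x) b := by
  simp only [link, Uncovered, mem_image, mem_filter]
  rintro _ ⟨t, ⟨ht, -⟩, rfl⟩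
  obtain ⟨j, hj, hbj⟩ := h t ht
  obtain rfl | hjx := eq_or_ne j x
  · simp at hbj
  · exact ⟨j, mem_erase.2 ⟨hjx, hj⟩, by rwa [Function.update_of_ne hjx] at hbj⟩

lemma Uncovered.filter_notMem_of_update {T : Finset (Finset ι)} {b : ι → Bool} {x : ι}
    {c : Bool} (h : Uncovered T (Function.update b x c)) : Uncovered {t ∈ T | x ∉ t} b := by
  intro t ht
  obtain ⟨ht, hxt⟩ := mem_filter.1 ht
  obtain ⟨j, hj, hbj⟩ := h t ht
  exact ⟨j, hj, by rwa [Function.update_of_ne (ne_of_mem_of_not_mem hj hxt)] at hbj⟩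

lemma card_link (T : Finset (Finset ι)) (x : ι) : #(link T x) = #{t ∈ T | x ∈ t} :=
  card_image_of_injOn fun _ hs _ ht h => erase_injOn' x (mem_filter.1 hs).2 (mem_filter.1 ht).2 h

lemma card_le_of_mem_link {T : Finset (Finset ι)} {ℓ : ℕ} (hT : ∀ t ∈ T, #t ≤ ℓ + 1) {x : ι} :
    ∀ t ∈ link T x, #t ≤ ℓ := by
  simp only [link, mem_image, mem_filter]
  rintro _ ⟨t, ⟨ht, hxt⟩, rfl⟩
  rw [card_erase_of_mem hxt]
  exact Nat.sub_le_of_le_add (hT t ht)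

variable [Fintype ι]

def uncoveredProb (p : ℝ) (T : Finset (Finset ι)) : ℝ :=
  ∑ b, biasedWeight p b * if Uncovered T b then 1 else 0

lemma uncoveredProb_nonneg (hp0 : 0 ≤ p) (hp1 : p ≤ 1) (T : Finset (Finset ι)) :
    0 ≤ uncoveredProb p T :=
  sum_nonneg fun b _ => mul_nonneg (biasedWeight_nonneg hp0 hp1 b) (by positivity)

lemma uncoveredProb_le_one (hp0 : 0 ≤ p) (hp1 : p ≤ 1) (T : Finset (Finset ι)) :
    uncoveredProb p T ≤ 1 :=
  calc uncoveredProb p T ≤ ∑ b, biasedWeight p b :=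
        sum_le_sum fun b _ => mul_le_of_le_one_right (biasedWeight_nonneg hp0 hp1 b)
          (by split_ifs <;> norm_num)
    _ = 1 := sum_biasedWeight

lemma uncoveredProb_eq_zero_of_empty_mem {T : Finset (Finset ι)} (h : ∅ ∈ T) :
    uncoveredProb p T = 0 :=
  sum_eq_zero fun b _ => by
    have : ¬Uncovered T b := fun hb => by simpa using hb ∅ h
    simp [this]

lemma uncoveredProb_le_link_add (hp0 : 0 ≤ p) (hp1 : p ≤ 1) (x : ι) (T : Finset (Finset ι)) :
    uncoveredProb p T
      ≤ p * uncoveredProb p (link T x) + (1 - p) * uncoveredProb p {t ∈ T | x ∉ t} := by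
  have hind {P Q : Prop} [Decidable P] [Decidable Q] (h : P → Q) :
      (if P then 1 else 0 : ℝ) ≤ if Q then 1 else 0 := by
    split_ifs <;> simp_all
  rw [uncoveredProb, sum_biasedWeight_mul_eq x, uncoveredProb, uncoveredProb, mul_sum, mul_sum,
    ← sum_add_distrib]
  refine sum_le_sum fun b _ => ?_
  have hw := biasedWeight_nonneg hp0 hp1 b
  have h1 := hind (Uncovered.link_of_update_true (T := T) (b := b) (x := x))
  have h2 := hind (Uncovered.filter_notMem_of_update (T := T) (b := b) (x := x) (c := false))
  have h3 : 0 ≤ 1 - p := by linarith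
  calc _ ≤ biasedWeight p b * (p * (if Uncovered (link T x) b then 1 else 0)
        + (1 - p) * (if Uncovered {t ∈ T | x ∉ t} b then 1 else 0)) := by gcongr
    _ = _ := by ring

end Uncovered

lemma card_filter_powerset_card_le_le_pow {α : Type*} (s : Finset α) :
    ∀ ℓ : ℕ, #{t ∈ s.powerset | #t ≤ ℓ} ≤ (#s + 1) ^ ℓ
  | 0 => by
    rw [pow_zero, card_le_one]
    intro t ht t' ht'
    simp only [mem_filter, nonpos_iff_eq_zero, card_eq_zero] at ht ht'
    rw [ht.2, ht'.2]
  | ℓ + 1 => by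
    classical
    have hsub : {t ∈ s.powerset | #t ≤ ℓ + 1}
        ⊆ {t ∈ s.powerset | #t ≤ ℓ} ∪ s.powersetCard (ℓ + 1) := by
      intro t ht
      simp only [mem_filter, mem_powerset] at ht
      rcases Nat.lt_or_ge #t (ℓ + 1) with h | h
      · exact mem_union_left _ (mem_filter.2 ⟨mem_powerset.2 ht.1, Nat.lt_succ_iff.1 h⟩)
      · exact mem_union_right _ (mem_powersetCard.2 ⟨ht.1, le_antisymm ht.2 h⟩)
    have hchoose : (#s).choose (ℓ + 1) ≤ #s * (#s + 1) ^ ℓ := by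
      calc (#s).choose (ℓ + 1) ≤ #s ^ (ℓ + 1) := Nat.choose_le_pow _ _
        _ = #s * #s ^ ℓ := pow_succ' _ _
        _ ≤ #s * (#s + 1) ^ ℓ := Nat.mul_le_mul_left _ (Nat.pow_le_pow_left (Nat.le_succ _) _)
    calc #{t ∈ s.powerset | #t ≤ ℓ + 1}
        ≤ #{t ∈ s.powerset | #t ≤ ℓ} + #(s.powersetCard (ℓ + 1)) :=
          (card_le_card hsub).trans (card_union_le _ _)
      _ ≤ (#s + 1) ^ ℓ + #s * (#s + 1) ^ ℓ := by
          rw [card_powersetCard]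
          exact Nat.add_le_add (card_filter_powerset_card_le_le_pow s ℓ) hchoose
      _ = (#s + 1) ^ (ℓ + 1) := by ring

section Degree

variable {ι : Type*} [Fintype ι] [DecidableEq ι]

lemma card_filter_mem_le_pow {T : Finset (Finset ι)} {ℓ : ℕ} (hT : ∀ t ∈ T, #t ≤ ℓ + 1) (x : ι) :
    #{t ∈ T | x ∈ t} ≤ Fintype.card ι ^ ℓ := by
  have hsub : link T x ⊆ {t ∈ (univ.erase x).powerset | #t ≤ ℓ} := by
    intro t ht
    refine mem_filter.2 ⟨mem_powerset.2 ?_, card_le_of_mem_link hT t ht⟩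
    obtain ⟨s, -, rfl⟩ := mem_image.1 ht
    exact erase_subset_erase x (subset_univ s)
  have hk : Fintype.card ι - 1 + 1 = Fintype.card ι :=
    Nat.sub_add_cancel (Fintype.card_pos_iff.2 ⟨x⟩)
  calc #{t ∈ T | x ∈ t} = #(link T x) := (card_link T x).symm
    _ ≤ _ := card_le_card hsub
    _ ≤ _ := card_filter_powerset_card_le_le_pow _ ℓ
    _ = Fintype.card ι ^ ℓ := by rw [card_erase_of_mem (mem_univ x), card_univ, hk]

lemma exists_card_le_mul_card_filter_mem {T : Finset (Finset ι)} (hne : T.Nonempty)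
    (hemp : ∅ ∉ T) : ∃ x, #T ≤ Fintype.card ι * #{t ∈ T | x ∈ t} := by
  have : Nonempty ι := by
    obtain ⟨t, ht⟩ := hne
    obtain ⟨x, -⟩ := nonempty_iff_ne_empty.2 (ne_of_mem_of_not_mem ht hemp)
    exact ⟨x⟩
  obtain ⟨x, -, hx⟩ := exists_max_image univ (fun a => #{t ∈ T | a ∈ t}) univ_nonempty
  refine ⟨x, ?_⟩
  calc #T = ∑ _ ∈ T, 1 := card_eq_sum_ones T
    _ ≤ ∑ t ∈ T, #t := sum_le_sum fun t ht =>
        card_pos.2 (nonempty_iff_ne_empty.2 (ne_of_mem_of_not_mem ht hemp))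
    _ ≤ _ := sum_card_le fun a => hx a (mem_univ a)

end Degree

section MonotoneFormula

variable {ι : Type*} [Fintype ι] [DecidableEq ι] {p : ℝ}

lemma one_sub_pow_le_exp_neg_mul (hp0 : 0 ≤ p) (hp1 : p ≤ 1) {n : ℕ} {A : ℝ} (hA : A ≤ n) :
    (1 - p) ^ n ≤ exp (-p * A) :=
  calc (1 - p) ^ n ≤ exp (-p) ^ n := pow_le_pow_left₀ (by linarith) (one_sub_le_exp_neg p) n
    _ = exp (-p * n) := by rw [← exp_nat_mul]; ring_nf
    _ ≤ exp (-p * A) := exp_le_exp.2 (by nlinarith)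

/-- Conditioning successively on `n` points supplied by `hstep`: each is set with probability
`p`, and then the link bounds the rest by `B`; otherwise we pass to the deletion, which has lost at
most `D` sets. -/
lemma uncoveredProb_le_pow_add {ℓ : ℕ} {g B D : ℝ} (hp0 : 0 ≤ p) (hp1 : p ≤ 1) (hB : 0 ≤ B)
    (hD : 0 ≤ D)
    (hstep : ∀ T : Finset (Finset ι), (∀ t ∈ T, #t ≤ ℓ) → ∅ ∉ T → g < #T →
      ∃ x, uncoveredProb p (link T x) ≤ B ∧ (#{t ∈ T | x ∈ t} : ℝ) ≤ D) (n : ℕ) :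
    ∀ T : Finset (Finset ι), (∀ t ∈ T, #t ≤ ℓ) → g + n * D < #T + D →
      uncoveredProb p T ≤ (1 - p) ^ n + B := by
  induction n with
  | zero =>
    intro T _ _
    linarith [uncoveredProb_le_one hp0 hp1 T, pow_zero (1 - p)]
  | succ n ih =>
    intro T hT hcard
    push_cast at hcard
    by_cases hemp : ∅ ∈ T
    · rw [uncoveredProb_eq_zero_of_empty_mem hemp]
      exact add_nonneg (pow_nonneg (by linarith) _) hB
    obtain ⟨x, hlink, hdeg⟩ := hstep T hT hemp (by nlinarith)
    have hsplit : (#{t ∈ T | x ∈ t} : ℝ) + #{t ∈ T | x ∉ t} = #T := by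
      exact_mod_cast card_filter_add_card_filter_not _
    have hrest := ih {t ∈ T | x ∉ t} (fun t ht => hT t (mem_filter.1 ht).1) (by linarith)
    calc uncoveredProb p T
        ≤ p * uncoveredProb p (link T x) + (1 - p) * uncoveredProb p {t ∈ T | x ∉ t} :=
          uncoveredProb_le_link_add hp0 hp1 x T
      _ ≤ p * B + (1 - p) * ((1 - p) ^ n + B) := by gcongr
      _ = (1 - p) ^ (n + 1) + B := by ring

lemma exists_uncoveredProb_link_le {ℓ : ℕ} {a : ℝ} (hp0 : 0 ≤ p) (ha : 0 ≤ a)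
    (ih : ∀ S : Finset (Finset ι), (∀ t ∈ S, #t ≤ ℓ) → S.Nonempty →
      uncoveredProb p S ≤ ℓ * exp (-(p * #S) / (ℓ * Fintype.card ι ^ (ℓ - 1))))
    (S : Finset (Finset ι)) (hS : ∀ t ∈ S, #t ≤ ℓ + 1) (hSemp : ∅ ∉ S)
    (hSa : a * ℓ / (ℓ + 1) < #S) :
    ∃ x, uncoveredProb p (link S x) ≤ ℓ * exp (-p * (a / ((ℓ + 1) * Fintype.card ι ^ ℓ))) ∧
      (#{t ∈ S | x ∈ t} : ℝ) ≤ Fintype.card ι ^ ℓ := by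
  set k := Fintype.card ι
  have hSne : S.Nonempty :=
    card_pos.1 (by exact_mod_cast (by positivity : (0 : ℝ) ≤ _).trans_lt hSa)
  obtain ⟨x, hx⟩ := exists_card_le_mul_card_filter_mem hSne hSemp
  refine ⟨x, ?_, by exact_mod_cast card_filter_mem_le_pow hS x⟩
  have hlink : (link S x).Nonempty := by
    rw [← card_pos, card_link]
    exact Nat.pos_of_mul_pos_left ((card_pos.2 hSne).trans_le hx)
  refine (ih _ (card_le_of_mem_link hS) hlink).trans ?_
  rcases ℓ.eq_zero_or_pos with rfl | hℓ
  · simp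
  have hk : (0 : ℝ) < k := by exact_mod_cast Fintype.card_pos_iff.2 ⟨x⟩
  gcongr ℓ * exp ?_
  rw [card_link, neg_mul, neg_div, neg_le_neg_iff, mul_div_assoc]
  refine mul_le_mul_of_nonneg_left ?_ hp0
  have hkx : (#S : ℝ) ≤ k * #{t ∈ S | x ∈ t} := by exact_mod_cast hx
  have hpow : (k : ℝ) ^ ℓ = k * k ^ (ℓ - 1) := by rw [← pow_succ', Nat.sub_add_cancel hℓ]
  rw [hpow, div_le_div_iff₀ (by positivity) (by positivity)]
  rw [div_lt_iff₀ (by positivity)] at hSa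
  have : a * ℓ ≤ k * #{t ∈ S | x ∈ t} * (ℓ + 1) := hSa.le.trans (by gcongr)
  nlinarith [mul_le_mul_of_nonneg_right this (pow_pos hk (ℓ - 1)).le]

theorem uncoveredProb_le_exp (hp0 : 0 ≤ p) (hp1 : p ≤ 1) (ℓ : ℕ) (T : Finset (Finset ι))
    (hT : ∀ t ∈ T, #t ≤ ℓ) (hne : T.Nonempty) :
    uncoveredProb p T ≤ ℓ * exp (-(p * #T) / (ℓ * Fintype.card ι ^ (ℓ - 1))) := by
  induction ℓ generalizing T with
  | zero =>
    obtain ⟨t, ht⟩ := hne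
    rw [card_eq_zero.1 (Nat.le_zero.1 (hT t ht))] at ht
    simp [uncoveredProb_eq_zero_of_empty_mem ht]
  | succ ℓ ih =>
    by_cases hemp : ∅ ∈ T
    · rw [uncoveredProb_eq_zero_of_empty_mem hemp]
      positivity
    -- splitting `#T = #T ℓ / (ℓ + 1) + #T / (ℓ + 1)` balances the two error terms
    have hstep := exists_uncoveredProb_link_le (a := #T) hp0 (Nat.cast_nonneg _) ih
    set k := Fintype.card ι
    set A : ℝ := #T / ((ℓ + 1) * k ^ ℓ) with hA
    obtain ⟨x₀, -⟩ := exists_card_le_mul_card_filter_mem hne hemp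
    have hk : (0 : ℝ) < k := by exact_mod_cast Fintype.card_pos_iff.2 ⟨x₀⟩
    have hA0 : 0 ≤ A := by positivity
    have hceil : (#T * ℓ / (ℓ + 1) : ℝ) + ⌈A⌉₊ * k ^ ℓ < #T + k ^ ℓ := by
      have hAk : A * k ^ ℓ = #T / (ℓ + 1) := by rw [hA]; field_simp
      have : (⌈A⌉₊ : ℝ) * k ^ ℓ < (A + 1) * k ^ ℓ := by gcongr; exact Nat.ceil_lt_add_one hA0
      have : (#T : ℝ) * ℓ / (ℓ + 1) + #T / (ℓ + 1) = #T := by field_simp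
      nlinarith
    calc uncoveredProb p T ≤ (1 - p) ^ ⌈A⌉₊ + ℓ * exp (-p * A) :=
          uncoveredProb_le_pow_add (D := (k : ℝ) ^ ℓ) hp0 hp1 (by positivity) (by positivity)
            hstep ⌈A⌉₊ T hT hceil
      _ ≤ exp (-p * A) + ℓ * exp (-p * A) := by
          gcongr; exact one_sub_pow_le_exp_neg_mul hp0 hp1 (Nat.le_ceil A)
      _ = _ := by rw [hA, Nat.add_sub_cancel]; push_cast; ring_nf

theorem uncoveredProb_le_of_le_card (hp0 : 0 ≤ p) (hp1 : p ≤ 1) {ℓ : ℕ} (hℓ : 0 < ℓ) {κ : ℝ}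
    (hκ : 0 ≤ κ) (T : Finset (Finset ι)) (hT : ∀ t ∈ T, #t ≤ ℓ)
    (hcard : κ * Fintype.card ι ^ ℓ ≤ #T) :
    uncoveredProb p T ≤ ℓ * exp (-(p * κ * Fintype.card ι) / ℓ) := by
  set k := Fintype.card ι
  have hℓ' : (1 : ℝ) ≤ ℓ := by exact_mod_cast hℓ
  by_cases h0 : κ * k = 0
  · rw [mul_assoc, h0]
    simpa using (uncoveredProb_le_one hp0 hp1 T).trans hℓ'
  have hκ0 : 0 < κ := lt_of_le_of_ne hκ (by rintro rfl; simp at h0)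
  have hk : (0 : ℝ) < k := lt_of_le_of_ne (Nat.cast_nonneg k) (by intro h; simp [← h] at h0)
  have hne : T.Nonempty :=
    card_pos.1 (by exact_mod_cast (by positivity : 0 < κ * k ^ ℓ).trans_le hcard)
  refine (uncoveredProb_le_exp hp0 hp1 ℓ T hT hne).trans ?_
  gcongr ℓ * exp ?_
  have hpow : (k : ℝ) ^ ℓ = k * k ^ (ℓ - 1) := by rw [← pow_succ', Nat.sub_add_cancel hℓ]
  rw [neg_div, neg_div, neg_le_neg_iff, div_le_div_iff₀ (by positivity) (by positivity)]
  rw [hpow] at hcard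
  have := pow_pos hk (ℓ - 1)
  nlinarith [mul_le_mul_of_nonneg_left hcard (by positivity : (0 : ℝ) ≤ p * ℓ)]

end MonotoneFormula

section ProductWeight

variable {β σ : Type*} [Fintype β] [Fintype σ] [DecidableEq σ] {μ : β → ℝ}

lemma sum_prod_eq_one (hμ : ∑ b, μ b = 1) : ∑ ω : σ → β, ∏ u, μ (ω u) = 1 := by
  rw [← Fintype.prod_sum fun _ => μ]
  simp [hμ]

/-- Chernoff bound, from Markov's inequality for the exponential of the count. -/
theorem sum_prod_mul_ite_lt_card_filter_le (hμ0 : ∀ b, 0 ≤ μ b) (hμ : ∑ b, μ b = 1)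
    (E : β → Prop) [DecidablePred E] (η : ℝ) :
    ∑ ω : σ → β, (∏ u, μ (ω u)) * (if η * Fintype.card σ < #{u | E (ω u)} then 1 else 0)
      ≤ exp ((exp 1 - 1) * (∑ b, μ b * if E b then 1 else 0) - η) ^ Fintype.card σ := by
  set q := ∑ b, μ b * if E b then 1 else 0
  have hq : 0 ≤ q := sum_nonneg fun b _ => mul_nonneg (hμ0 b) (by positivity)
  have hmgf : ∑ b, μ b * exp (if E b then 1 else 0) = 1 + (exp 1 - 1) * q := by
    have hpt : ∀ b, μ b * exp (if E b then 1 else 0)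
        = μ b + (exp 1 - 1) * (μ b * if E b then 1 else 0) := fun b => by
      by_cases h : E b <;> simp [h]; ring
    rw [sum_congr rfl fun b _ => hpt b, sum_add_distrib, ← mul_sum, hμ]
  have hmarkov : ∀ ω : σ → β, (if η * Fintype.card σ < #{u | E (ω u)} then 1 else 0 : ℝ)
      ≤ exp (-η * Fintype.card σ) * ∏ u, exp (if E (ω u) then 1 else 0) := by
    intro ω
    rw [← exp_sum, ← exp_add, sum_boole]
    split_ifs with h
    · exact one_le_exp (by linarith)
    · exact (exp_pos _).le
  calc _ ≤ ∑ ω : σ → β, (∏ u, μ (ω u)) *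
        (exp (-η * Fintype.card σ) * ∏ u, exp (if E (ω u) then 1 else 0)) :=
        sum_le_sum fun ω _ => mul_le_mul_of_nonneg_left (hmarkov ω) (prod_nonneg fun u _ => hμ0 _)
    _ = exp (-η * Fintype.card σ) * (1 + (exp 1 - 1) * q) ^ Fintype.card σ := by
        rw [← hmgf, ← card_univ, ← prod_const,
          Fintype.prod_sum fun (_ : σ) b => μ b * exp (if E b then 1 else 0), mul_sum]
        refine sum_congr rfl fun ω _ => ?_
        rw [prod_mul_distrib]
        ring
    _ ≤ exp (-η * Fintype.card σ) * exp ((exp 1 - 1) * q) ^ Fintype.card σ := by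
        gcongr
        · nlinarith [add_one_lt_exp one_ne_zero]
        · linarith [add_one_le_exp ((exp 1 - 1) * q)]
    _ = _ := by rw [← exp_nat_mul, ← exp_nat_mul, ← exp_add]; ring_nf

end ProductWeight

lemma one_sub_sum_le_sum_ite {Ω J : Type*} [Fintype Ω] {W : Ω → ℝ} (hW0 : ∀ ω, 0 ≤ W ω)
    (hW : ∑ ω, W ω = 1) (P : Ω → Prop) [DecidablePred P] (I : Finset J) (E : J → Ω → Prop)
    [∀ i, DecidablePred (E i)] (hcover : ∀ ω, ¬P ω → ∃ i ∈ I, E i ω) :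
    1 - ∑ i ∈ I, ∑ ω, W ω * (if E i ω then 1 else 0) ≤ ∑ ω, if P ω then W ω else 0 := by
  rw [sum_comm]
  nth_rewrite 1 [← hW]
  rw [← sum_sub_distrib]
  refine sum_le_sum fun ω _ => ?_
  have hterm : ∀ i ∈ I, 0 ≤ W ω * (if E i ω then 1 else 0) := fun i _ =>
    mul_nonneg (hW0 ω) (by split_ifs <;> norm_num)
  have hsum := sum_nonneg hterm
  split_ifs with hP
  · linarith
  obtain ⟨i, hi, hEi⟩ := hcover ω hP
  have := single_le_sum hterm hi
  simp only [hEi, if_true, mul_one] at this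
  linarith

lemma sum_ite_le_one {Ω : Type*} [Fintype Ω] {W : Ω → ℝ} (hW0 : ∀ ω, 0 ≤ W ω)
    (hW : ∑ ω, W ω = 1) (P : Ω → Prop) [DecidablePred P] :
    ∑ ω, (if P ω then W ω else 0) ≤ 1 :=
  hW ▸ sum_le_sum fun ω _ => by split_ifs <;> simp [hW0 ω]

lemma sdiff_sup_inf_eq_filter_uncovered {σ ι : Type*} [Fintype σ] [DecidableEq σ]
    [DecidableEq ι] (ω : σ → ι → Bool) (Js : Finset (Finset ι)) :
    univ \ Js.sup (fun J => univ ∩ J.inf fun j => univ.filter fun u => ω u j = true)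
      = univ.filter fun u => Uncovered Js (ω u) := by
  ext u
  simp only [mem_sdiff, mem_univ, true_and, mem_sup, mem_inter, mem_inf, mem_filter]
  simp [Uncovered]

open Classical in
lemma one_sub_le_sum_ite_SIDFam {k m ℓ : ℕ} {p r η q : ℝ} (hp0 : 0 ≤ p) (hp1 : p ≤ 1)
    (hq : ∀ Js : Finset (Finset (Fin k)), (∀ J ∈ Js, #J ≤ ℓ) → r ≤ #Js → uncoveredProb p Js ≤ q) :
    1 - Fintype.card (Finset (Finset (Fin k))) * exp ((exp 1 - 1) * q - η) ^ m ≤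
      ∑ ω : Fin k → Fin m → Bool,
        if SIDFam univ (fun j => univ.filter fun u => ω j u = true) r ℓ η
        then ∏ j, ∏ u, (if ω j u then p else 1 - p) else 0 := by
  rw [← (Equiv.piComm fun (_ : Fin m) (_ : Fin k) => Bool).sum_comp]
  have hW : ∀ ω : Fin m → Fin k → Bool,
      ∏ j, ∏ u, (if ω u j then p else 1 - p) = ∏ u, biasedWeight p (ω u) := fun ω => prod_comm
  simp only [Equiv.piComm_apply, hW]
  set I := univ.filter fun Js : Finset (Finset (Fin k)) => (∀ J ∈ Js, #J ≤ ℓ) ∧ r ≤ #Js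
  refine le_trans ?_ (one_sub_sum_le_sum_ite
    (fun ω => prod_nonneg fun u _ => biasedWeight_nonneg hp0 hp1 _)
    (sum_prod_eq_one sum_biasedWeight) _ I (fun Js ω => η * m < #{u | Uncovered Js (ω u)}) ?_)
  · have hchernoff : ∀ Js ∈ I, ∑ ω : Fin m → Fin k → Bool, (∏ u, biasedWeight p (ω u)) *
        (if η * m < #{u | Uncovered Js (ω u)} then 1 else 0) ≤ exp ((exp 1 - 1) * q - η) ^ m := by
      intro Js hJs
      obtain ⟨-, hJ, hr⟩ := mem_filter.1 hJs
      have hbound := sum_prod_mul_ite_lt_card_filter_le (σ := Fin m) (biasedWeight_nonneg hp0 hp1)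
        sum_biasedWeight (Uncovered Js) η
      rw [Fintype.card_fin] at hbound
      refine hbound.trans (pow_le_pow_left₀ (exp_pos _).le (exp_le_exp.2 ?_) m)
      change (exp 1 - 1) * uncoveredProb p Js - η ≤ _
      have := hq Js hJ hr
      nlinarith [add_one_le_exp 1, uncoveredProb_nonneg hp0 hp1 Js]
    refine sub_le_sub_left ((sum_le_card_nsmul _ _ _ hchernoff).trans ?_) 1
    rw [nsmul_eq_mul]
    gcongr
    exact_mod_cast card_le_univ I
  · intro ω hω
    simp only [SIDFam, not_forall, not_le] at hω
    obtain ⟨Js, hJs, hr, hbad⟩ := hω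
    refine ⟨Js, mem_filter.2 ⟨mem_univ _, hJs, hr⟩, ?_⟩
    rwa [sdiff_sup_inf_eq_filter_uncovered, card_univ, Fintype.card_fin] at hbad

open Classical in
/-- Random subsets form strong intersection dispersers: `k₀` random subsets of a universe of
size `m₀` (each element included in each subset independently with probability `p`) form a
`(κk₀^ℓ, ℓ, 2ℓ·e^{−pκk₀/ℓ})`-strong intersection disperser with probability tending to `1` as
`m₀ → ∞`. -/
theorem stmt_10 (p κ : ℝ) (hp : p ∈ Set.Ioo (0:ℝ) 1) (hκ : κ ∈ Set.Ioo (0:ℝ) 1)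
    (ℓ k₀ : ℕ) (hℓ : 0 < ℓ) :
    Filter.Tendsto
      (fun m₀ : ℕ =>
        ∑ ω : Fin k₀ → Fin m₀ → Bool,
          (if SIDFam (Finset.univ : Finset (Fin m₀))
                (fun j => Finset.univ.filter (fun u => ω j u = true))
                (κ * (k₀ : ℝ) ^ ℓ) ℓ (2 * (ℓ : ℝ) * Real.exp (-(p * κ * k₀) / ℓ))
            then ∏ j : Fin k₀, ∏ u : Fin m₀, (if ω j u then p else 1 - p) else 0))
      Filter.atTop (nhds (1 : ℝ)) := by
  obtain ⟨hp0, hp1⟩ := hp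
  set η := 2 * (ℓ : ℝ) * exp (-(p * κ * k₀) / ℓ)
  have hη : 0 < η := by positivity
  have hq : ∀ Js : Finset (Finset (Fin k₀)), (∀ J ∈ Js, #J ≤ ℓ) → κ * (k₀ : ℝ) ^ ℓ ≤ #Js →
      uncoveredProb p Js ≤ η / 2 := by
    intro Js hJ hcard
    have := uncoveredProb_le_of_le_card hp0.le hp1.le hℓ hκ.1.le Js hJ (by simpa using hcard)
    simp only [Fintype.card_fin] at this
    linarith
  have hρ : exp ((exp 1 - 1) * (η / 2) - η) < 1 :=
    exp_lt_one_iff.2 (by nlinarith [exp_one_lt_d9])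
  have hlower := ((tendsto_pow_atTop_nhds_zero_of_lt_one (exp_pos _).le hρ).const_mul
    (Fintype.card (Finset (Finset (Fin k₀))) : ℝ)).const_sub 1
  rw [mul_zero, sub_zero] at hlower
  exact tendsto_of_tendsto_of_tendsto_of_le_of_le hlower tendsto_const_nhds
    (fun _ => one_sub_le_sum_ite_SIDFam hp0.le hp1.le hq)
    (fun _ => sum_ite_le_one (fun _ => prod_nonneg fun _ _ => biasedWeight_nonneg hp0.le hp1.le _)
      (sum_prod_eq_one sum_biasedWeight) _)
end

section
/- Decoding a good SAT assignment from local agreement: Let Φ be a 3-CNF formula on variable set X with m clauses, each variable appearing in at most Δ clauses and at least one clause. Let 𝓣* be a (γ,μ)-uniform collection of subsets of clauses (with respect to the universe of clauses), and for each T ∈ 𝓣* let σ_T be an assignment to var(T) satisfying all clauses of T. If there exists ψ: X → {0,1} with E_{T∈𝓣*}[disagr(ψ, σ_T)] ≤ νn (where n = |X|), then val(ψ) ≥ 1 − μ − 3νΔ/γ. -/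
/-!
Call a clause heavy if it lies in at least a `γ` fraction of the sets `T ∈ 𝓣*`; all but `μm`
clauses are heavy. A heavy clause violated by `ψ` yields, for each `T` containing it, a variable
on which `ψ` disagrees with `σ_T`, because `σ_T` satisfies the clause. A variable is charged by
at most `Δ` clauses, so double counting gives
`γ |𝓣*| · #(heavy violated clauses) ≤ Δ · ∑_T disagr(ψ, σ_T) ≤ Δ ν n |𝓣*|`,
and `n ≤ 3m` because every variable occurs in some clause of at most three literals.
-/

open Finset

namespace CNF

variable {ι X : Type*} (lit : ι → Finset (X × Bool))

def Satisfies (a : X → Bool) (C : ι) : Prop := ∃ l ∈ lit C, a l.1 = l.2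

variable [DecidableEq X]

def clauseVars (C : ι) : Finset X := (lit C).image Prod.fst

def disagreements (T : Finset ι) (ψ σ : X → Bool) : Finset X :=
  (T.biUnion (clauseVars lit)).filter fun x => ψ x ≠ σ x

variable {lit}

theorem exists_ne_of_satisfies_of_not_satisfies {σ ψ : X → Bool} {C : ι}
    (hσ : Satisfies lit σ C) (hψ : ¬ Satisfies lit ψ C) :
    ∃ x ∈ clauseVars lit C, ψ x ≠ σ x := by
  obtain ⟨l, hl, hσl⟩ := hσ
  exact ⟨l.1, mem_image_of_mem _ hl, fun h => hψ ⟨l, hl, h.trans hσl⟩⟩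

theorem card_le_mul_card_of_forall_mem_clauseVars [Fintype X] {𝓒 : Finset ι} {k : ℕ}
    (hk : ∀ C ∈ 𝓒, #(lit C) ≤ k)
    (hcover : ∀ x, 1 ≤ #(𝓒.filter fun C => x ∈ clauseVars lit C)) :
    Fintype.card X ≤ k * #𝓒 := by
  have key := card_mul_le_card_mul (fun x C => x ∈ clauseVars lit C) (s := univ) (t := 𝓒)
    (fun x _ => hcover x)
    (fun C hC => calc
      #(univ.bipartiteBelow _ C) ≤ #(clauseVars lit C) :=
        card_le_card fun x hx => (mem_filter.1 hx).2
      _ ≤ k := card_image_le.trans (hk C hC))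
  simpa [mul_comm] using key

section DoubleCounting

variable [DecidableEq ι]

theorem card_filter_mem_le_mul_card_disagreements {B T : Finset ι} {Δ : ℕ} {σ ψ : X → Bool}
    (hσ : ∀ C ∈ T, Satisfies lit σ C) (hψ : ∀ C ∈ B, ¬ Satisfies lit ψ C)
    (hΔ : ∀ x, #(B.filter fun C => x ∈ clauseVars lit C) ≤ Δ) :
    #(B.filter (· ∈ T)) ≤ Δ * #(disagreements lit T ψ σ) := by
  have key := card_mul_le_card_mul (fun C x => x ∈ clauseVars lit C)
    (s := B.filter (· ∈ T)) (t := disagreements lit T ψ σ)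
    (fun C hC => by
      obtain ⟨hCB, hCT⟩ := mem_filter.1 hC
      obtain ⟨x, hx, hne⟩ := exists_ne_of_satisfies_of_not_satisfies (hσ C hCT) (hψ C hCB)
      exact card_pos.2 ⟨x, mem_filter.2 ⟨mem_filter.2 ⟨mem_biUnion.2 ⟨C, hCT, hx⟩, hne⟩, hx⟩⟩)
    (fun x _ => (card_le_card (filter_subset_filter _ (filter_subset _ _))).trans (hΔ x))
  simpa [mul_comm] using key

theorem sum_card_filter_mem_le_mul_sum_card_disagreements {B : Finset ι}
    {𝓣s : Finset (Finset ι)} {Δ : ℕ} {σ : Finset ι → X → Bool} {ψ : X → Bool}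
    (hσ : ∀ T ∈ 𝓣s, ∀ C ∈ T, Satisfies lit (σ T) C) (hψ : ∀ C ∈ B, ¬ Satisfies lit ψ C)
    (hΔ : ∀ x, #(B.filter fun C => x ∈ clauseVars lit C) ≤ Δ) :
    ∑ C ∈ B, #(𝓣s.filter (C ∈ ·)) ≤ Δ * ∑ T ∈ 𝓣s, #(disagreements lit T ψ (σ T)) := by
  calc ∑ C ∈ B, #(𝓣s.filter (C ∈ ·)) = ∑ T ∈ 𝓣s, #(B.filter (· ∈ T)) :=
        sum_card_bipartiteAbove_eq_sum_card_bipartiteBelow (fun C T => C ∈ T)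
    _ ≤ ∑ T ∈ 𝓣s, Δ * #(disagreements lit T ψ (σ T)) :=
        sum_le_sum fun T hT => card_filter_mem_le_mul_card_disagreements (hσ T hT) hψ hΔ
    _ = Δ * ∑ T ∈ 𝓣s, #(disagreements lit T ψ (σ T)) := (mul_sum ..).symm

theorem mul_card_le_mul_sum_card_disagreements {B : Finset ι} {𝓣s : Finset (Finset ι)}
    {Δ : ℕ} {γ : ℝ} {σ : Finset ι → X → Bool} {ψ : X → Bool}
    (hσ : ∀ T ∈ 𝓣s, ∀ C ∈ T, Satisfies lit (σ T) C) (hψ : ∀ C ∈ B, ¬ Satisfies lit ψ C)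
    (hΔ : ∀ x, #(B.filter fun C => x ∈ clauseVars lit C) ≤ Δ)
    (hheavy : ∀ C ∈ B, γ * #𝓣s ≤ #(𝓣s.filter (C ∈ ·))) :
    γ * #𝓣s * #B ≤ Δ * ∑ T ∈ 𝓣s, (#(disagreements lit T ψ (σ T)) : ℝ) := calc
  γ * #𝓣s * #B = ∑ _C ∈ B, γ * #𝓣s := by rw [sum_const, nsmul_eq_mul, mul_comm]
  _ ≤ ∑ C ∈ B, (#(𝓣s.filter (C ∈ ·)) : ℝ) := sum_le_sum hheavy
  _ ≤ Δ * ∑ T ∈ 𝓣s, (#(disagreements lit T ψ (σ T)) : ℝ) := by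
    exact_mod_cast sum_card_filter_mem_le_mul_sum_card_disagreements hσ hψ hΔ

end DoubleCounting

end CNF

open CNF

open Classical in
theorem stmt_14_general {ι X : Type} [Fintype X] [DecidableEq ι] [DecidableEq X]
    (𝓒 : Finset ι)
    -- each clause is an OR of at most 3 literals (variable, polarity)
    (lit : ι → Finset (X × Bool)) (h3 : ∀ C ∈ 𝓒, (lit C).card ≤ 3)
    (Δ : ℕ)
    (hΔ : ∀ x : X, (𝓒.filter (fun C => x ∈ (lit C).image Prod.fst)).card ≤ Δ)
    (h1 : ∀ x : X, 1 ≤ (𝓒.filter (fun C => x ∈ (lit C).image Prod.fst)).card)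
    (γ μ ν : ℝ) (hγ : 0 < γ) (hν : 0 ≤ ν)
    (𝓣s : Finset (Finset ι)) (h𝓣ne : 𝓣s.Nonempty)
    -- (γ, μ)-uniformity of 𝓣*
    (hunif : (1 - μ) * (𝓒.card : ℝ)
      ≤ ((𝓒.filter (fun C =>
          γ * (𝓣s.card : ℝ) ≤ ((𝓣s.filter (fun T => C ∈ T)).card : ℝ))).card : ℝ))
    -- each local assignment σ_T satisfies all clauses of T
    (σ : Finset ι → X → Bool)
    (hσ : ∀ T ∈ 𝓣s, ∀ C ∈ T, ∃ l ∈ lit C, σ T l.1 = l.2)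
    (ψ : X → Bool)
    -- E_{T ∈ 𝓣*}[disagr(ψ, σ_T)] ≤ ν n  where n = |X|
    (hdis : (∑ T ∈ 𝓣s,
        (((T.biUnion (fun C => (lit C).image Prod.fst)).filter
            (fun x => ψ x ≠ σ T x)).card : ℝ))
      ≤ ν * (Fintype.card X : ℝ) * (𝓣s.card : ℝ)) :
    (1 - μ - 3 * ν * (Δ : ℝ) / γ) * (𝓒.card : ℝ)
      ≤ ((𝓒.filter (fun C => ∃ l ∈ lit C, ψ l.1 = l.2)).card : ℝ) := by
  set Heavy := 𝓒.filter fun C =>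
    γ * (𝓣s.card : ℝ) ≤ ((𝓣s.filter (fun T => C ∈ T)).card : ℝ)
  set Sat := 𝓒.filter fun C => ∃ l ∈ lit C, ψ l.1 = l.2
  have hViolated : ∀ C ∈ Heavy \ Sat, ¬ Satisfies lit ψ C := fun C hC hsat =>
    (mem_sdiff.1 hC).2 (mem_filter.2 ⟨(mem_filter.1 (mem_sdiff.1 hC).1).1, hsat⟩)
  have hcount : γ * #𝓣s * #(Heavy \ Sat) ≤ Δ * (ν * Fintype.card X * #𝓣s) :=
    (mul_card_le_mul_sum_card_disagreements hσ hViolated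
      (fun x => (card_le_card (filter_subset_filter _
        (sdiff_subset.trans (filter_subset _ _)))).trans (hΔ x))
      (fun C hC => (mem_filter.1 (mem_sdiff.1 hC).1).2)).trans
    (mul_le_mul_of_nonneg_left hdis Δ.cast_nonneg)
  have hn : (Fintype.card X : ℝ) ≤ 3 * #𝓒 := by
    exact_mod_cast card_le_mul_card_of_forall_mem_clauseVars h3 h1
  have hT : (0 : ℝ) < #𝓣s := by exact_mod_cast h𝓣ne.card_pos
  have hHeavyViolated : (#(Heavy \ Sat) : ℝ) ≤ 3 * ν * Δ / γ * #𝓒 := by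
    rw [div_mul_eq_mul_div, le_div_iff₀ hγ]
    nlinarith [mul_le_mul_of_nonneg_left hn (mul_nonneg hν Δ.cast_nonneg)]
  have hHeavy : (#Heavy : ℝ) ≤ #(Heavy \ Sat) + #Sat := by
    exact_mod_cast card_le_card_sdiff_add_card
  linarith

open Classical in
/-- Decoding a good SAT assignment from local agreement: if `𝓣*` is a `(γ, μ)`-uniform
collection of subsets of the clauses of a 3-CNF formula (each variable in at most `Δ` and at
least one clause), each `σ_T` satisfies all clauses of `T`, and a global assignment `ψ`
satisfies `E_{T∈𝓣*}[disagr(ψ, σ_T)] ≤ νn`, then `ψ` satisfies at least a `1 − μ − 3νΔ/γ`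
fraction of the clauses. -/
theorem stmt_14 {ι X : Type} [Fintype ι] [Fintype X] [DecidableEq ι] [DecidableEq X]
    (𝓒 : Finset ι) (hne : 𝓒.Nonempty)
    -- each clause is an OR of at most 3 literals (variable, polarity)
    (lit : ι → Finset (X × Bool)) (h3 : ∀ C ∈ 𝓒, (lit C).card ≤ 3)
    (Δ : ℕ)
    (hΔ : ∀ x : X, (𝓒.filter (fun C => x ∈ (lit C).image Prod.fst)).card ≤ Δ)
    (h1 : ∀ x : X, 1 ≤ (𝓒.filter (fun C => x ∈ (lit C).image Prod.fst)).card)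
    (γ μ ν : ℝ) (hγ : 0 < γ) (hμ : 0 ≤ μ) (hν : 0 ≤ ν)
    (𝓣s : Finset (Finset ι)) (h𝓣 : ∀ T ∈ 𝓣s, T ⊆ 𝓒) (h𝓣ne : 𝓣s.Nonempty)
    -- (γ, μ)-uniformity of 𝓣*
    (hunif : (1 - μ) * (𝓒.card : ℝ)
      ≤ ((𝓒.filter (fun C =>
          γ * (𝓣s.card : ℝ) ≤ ((𝓣s.filter (fun T => C ∈ T)).card : ℝ))).card : ℝ))
    -- each local assignment σ_T satisfies all clauses of T
    (σ : Finset ι → X → Bool)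
    (hσ : ∀ T ∈ 𝓣s, ∀ C ∈ T, ∃ l ∈ lit C, σ T l.1 = l.2)
    (ψ : X → Bool)
    -- E_{T ∈ 𝓣*}[disagr(ψ, σ_T)] ≤ ν n  where n = |X|
    (hdis : (∑ T ∈ 𝓣s,
        (((T.biUnion (fun C => (lit C).image Prod.fst)).filter
            (fun x => ψ x ≠ σ T x)).card : ℝ))
      ≤ ν * (Fintype.card X : ℝ) * (𝓣s.card : ℝ)) :
    (1 - μ - 3 * ν * (Δ : ℝ) / γ) * (𝓒.card : ℝ)
      ≤ ((𝓒.filter (fun C => ∃ l ∈ lit C, ψ l.1 = l.2)).card : ℝ) :=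
  stmt_14_general 𝓒 lit h3 Δ hΔ h1 γ μ ν hγ hν 𝓣s h𝓣ne hunif σ hσ ψ hdis
end
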